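/- Suppose two Lusztig data (𝐢,𝐜) and (𝐢′,𝐜′) are connected by a 3-move: there is 1 < k < ℓ with i_{k−1} = i_{k+1} = i′_k, i_k = i′_{k−1} = i′_{k+1}, where i_k and i_{k+1} are adjacent vertices, i_l = i′_l for l ≠ k−1,k,k+1, c_l = c′_l for l ≠ k−1,k,k+1, and (c′_{k−1}, c′_k, c′_{k+1}) = (c_k + c_{k+1} − c₀, c₀, c_{k−1} + c_k − c₀) with c₀ := min{c_{k−1}, c_{k+1}}. Then wt(𝐢,𝐜) = wt(𝐢′,𝐜′). -/
import Mathlib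


open Finset

/-- The product `s_{i₁} ⋯ s_{i_k}` of the first `k` simple reflections of the
word `i`, in the Weyl group `W`. -/
def wordProd {I W : Type*} [Group W] (s : I → W) {ℓ : ℕ} (i : Fin ℓ → I)
    (k : ℕ) : W :=
  ((List.ofFn fun j => s (i j)).take k).prod

/-- The weight `wt(𝐢,𝐜) = Σ_k c_k · s_{i₁}⋯s_{i_{k−1}}(α_{i_k})` of a Lusztig
datum, in the root lattice `Q` acted on by the Weyl group `W`. -/
def wt {I W Q : Type*} [Group W] [AddCommGroup Q] [DistribMulAction W Q]
    (s : I → W) (α : I → Q) {ℓ : ℕ} (i : Fin ℓ → I) (c : Fin ℓ → ℕ) : Q :=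
  ∑ k : Fin ℓ, c k • (wordProd s i ↑k • α (i k))

private lemma wordProd_succ' {I W : Type*} [Group W] (s : I → W) {ℓ : ℕ}
    (i : Fin ℓ → I) (m : ℕ) (hm : m < ℓ) :
    wordProd s i (m + 1) = wordProd s i m * s (i ⟨m, hm⟩) := by
  unfold wordProd
  rw [List.prod_take_succ _ m (by simpa using hm)]
  simp

/-- two Lusztig data connected by a 3-move (positions
`k−1, k, k+1` carry the adjacent vertices `a, b, a` resp. `b, a, b`, with the
braid relation `s_a s_b s_a = s_b s_a s_b` and `s_a(α_b) = α_a + α_b`, etc.)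
have the same weight. -/
theorem stmt5 {I W Q : Type*} [Group W] [AddCommGroup Q] [DistribMulAction W Q]
    (s : I → W) (α : I → Q) (ℓ : ℕ) (i i' : Fin ℓ → I) (c c' : Fin ℓ → ℕ)
    (a b : I) (k : ℕ) (h1 : 1 ≤ k) (hk : k + 1 < ℓ)
    (hia : i ⟨k - 1, by omega⟩ = a) (hib : i ⟨k, by omega⟩ = b)
    (hia' : i ⟨k + 1, hk⟩ = a)
    (hi'b : i' ⟨k - 1, by omega⟩ = b) (hi'a : i' ⟨k, by omega⟩ = a)
    (hi'b' : i' ⟨k + 1, hk⟩ = b)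
    (hirest : ∀ l : Fin ℓ, (l : ℕ) ≠ k - 1 → (l : ℕ) ≠ k → (l : ℕ) ≠ k + 1 →
      i l = i' l)
    (hbraid : s a * s b * s a = s b * s a * s b)
    (hab : s a • α b = α a + α b) (hba : s b • α a = α a + α b)
    (haa : s a • α a = - α a) (hbb : s b • α b = - α b)
    (hcrest : ∀ l : Fin ℓ, (l : ℕ) ≠ k - 1 → (l : ℕ) ≠ k → (l : ℕ) ≠ k + 1 →
      c l = c' l)
    (hc1 : c' ⟨k - 1, by omega⟩
      = c ⟨k, by omega⟩ + c ⟨k + 1, hk⟩ - min (c ⟨k - 1, by omega⟩) (c ⟨k + 1, hk⟩))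
    (hc2 : c' ⟨k, by omega⟩ = min (c ⟨k - 1, by omega⟩) (c ⟨k + 1, hk⟩))
    (hc3 : c' ⟨k + 1, hk⟩
      = c ⟨k - 1, by omega⟩ + c ⟨k, by omega⟩ - min (c ⟨k - 1, by omega⟩) (c ⟨k + 1, hk⟩)) :
    wt s α i c = wt s α i' c' := by
  
  have hkl : k - 1 < ℓ := by omega
  have hkl2 : k < ℓ := by omega
  have hkl3 : k - 1 + 1 < ℓ := by omega
  have hkl4 : k + 2 ≤ ℓ := by omega
  have hk1 : k - 1 + 1 = k := by omega
  -- prefix equality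
  have hpre : ∀ m, m ≤ k - 1 → wordProd s i m = wordProd s i' m := by
    intro m hm
    induction m with
    | zero => simp [wordProd]
    | succ n ih =>
      have hn : n < ℓ := by omega
      have e1 : (n : ℕ) ≠ k - 1 := by omega
      have e2 : (n : ℕ) ≠ k := by omega
      have e3 : (n : ℕ) ≠ k + 1 := by omega
      have hir := hirest ⟨n, hn⟩ e1 e2 e3
      have ihh := ih (by omega)
      rw [wordProd_succ' s i n hn, wordProd_succ' s i' n hn, ihh, hir]
  have hP' : wordProd s i' (k - 1) = wordProd s i (k - 1) := (hpre (k - 1) le_rfl).symm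
  have hmk : (⟨k - 1 + 1, hkl3⟩ : Fin ℓ) = ⟨k, hkl2⟩ := by
    simp only [Fin.mk.injEq]; omega
  have hwi_k : wordProd s i k = (wordProd s i (k - 1)) * s a := by
    have h := wordProd_succ' s i (k - 1) hkl
    rw [hk1] at h
    rw [h, hia]
  have hwi_k1 : wordProd s i (k + 1) = (wordProd s i (k - 1)) * s a * s b := by
    have h2 : k + 1 = (k - 1 + 1) + 1 := by omega
    rw [h2, wordProd_succ' s i (k - 1 + 1) hkl3, hmk, hk1, hwi_k, hib]
  have hwi_k2 : wordProd s i (k + 2) = (wordProd s i (k - 1)) * s a * s b * s a := by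
    have h2 : k + 2 = (k + 1) + 1 := rfl
    rw [h2, wordProd_succ' s i (k + 1) hk, hwi_k1, hia']
  have hwi'_k : wordProd s i' k = (wordProd s i (k - 1)) * s b := by
    have h := wordProd_succ' s i' (k - 1) hkl
    rw [hk1] at h
    rw [h, hP', hi'b]
  have hwi'_k1 : wordProd s i' (k + 1) = (wordProd s i (k - 1)) * s b * s a := by
    have h2 : k + 1 = (k - 1 + 1) + 1 := by omega
    rw [h2, wordProd_succ' s i' (k - 1 + 1) hkl3, hmk, hk1, hwi'_k, hi'a]
  have hwi'_k2 : wordProd s i' (k + 2) = (wordProd s i (k - 1)) * s b * s a * s b := by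
    have h2 : k + 2 = (k + 1) + 1 := rfl
    rw [h2, wordProd_succ' s i' (k + 1) hk, hwi'_k1, hi'b']
  have hbraid' : s a * (s b * s a) = s b * (s a * s b) := by
    rw [← mul_assoc, hbraid, mul_assoc]
  have hmid : wordProd s i (k + 2) = wordProd s i' (k + 2) := by
    rw [hwi_k2, hwi'_k2, mul_assoc, mul_assoc, mul_assoc, mul_assoc, hbraid']
  have hsuf : ∀ m, k + 2 + m ≤ ℓ → wordProd s i (k + 2 + m) = wordProd s i' (k + 2 + m) := by
    intro m hm
    induction m with
    | zero => exact hmid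
    | succ n ih =>
      have hn : k + 2 + n < ℓ := by omega
      have e1 : k + 2 + n ≠ k - 1 := by omega
      have e2 : k + 2 + n ≠ k := by omega
      have e3 : k + 2 + n ≠ k + 1 := by omega
      have hir := hirest ⟨k + 2 + n, hn⟩ e1 e2 e3
      have ihh := ih (by omega)
      have h2 : k + 2 + (n + 1) = (k + 2 + n) + 1 := rfl
      rw [h2, wordProd_succ' s i (k + 2 + n) hn, wordProd_succ' s i' (k + 2 + n) hn,
        ihh, hir]
  have hword : ∀ l : Fin ℓ, (l : ℕ) ≠ k - 1 → (l : ℕ) ≠ k → (l : ℕ) ≠ k + 1 →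
      wordProd s i ↑l = wordProd s i' ↑l := by
    intro l e1 e2 e3
    rcases lt_or_ge (l : ℕ) k with h | h
    · exact hpre l (by omega)
    · have h2 : (l : ℕ) = k + 2 + ((l : ℕ) - (k + 2)) := by omega
      rw [h2]
      exact hsuf _ (by omega)
  -- the three middle indices
  set k1 : Fin ℓ := ⟨k - 1, hkl⟩ with hk1d
  set k2 : Fin ℓ := ⟨k, hkl2⟩ with hk2d
  set k3 : Fin ℓ := ⟨k + 1, hk⟩ with hk3d
  set S : Finset (Fin ℓ) := {k1, k2, k3} with hSd
  have hmemS : ∀ l : Fin ℓ, l ∈ S ↔ ((l : ℕ) = k - 1 ∨ (l : ℕ) = k ∨ (l : ℕ) = k + 1) := by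
    intro l
    simp [hSd, hk1d, hk2d, hk3d, Fin.ext_iff]
  have hm1 : k1 ∉ ({k2, k3} : Finset (Fin ℓ)) := by
    simp [hk1d, hk2d, hk3d, Fin.ext_iff]; omega
  have hm2 : k2 ∉ ({k3} : Finset (Fin ℓ)) := by
    simp [hk2d, hk3d, Fin.ext_iff]
  have hSsum : ∀ g : Fin ℓ → Q, (∑ l ∈ S, g l) = g k1 + g k2 + g k3 := by
    intro g
    rw [hSd, Finset.sum_insert hm1, Finset.sum_insert hm2, Finset.sum_singleton, add_assoc]
  unfold wt
  rw [← Finset.sum_add_sum_compl S, ← Finset.sum_add_sum_compl S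
    (fun l => c' l • (wordProd s i' ↑l • α (i' l)))]
  congr 1
  · -- middle three terms
    rw [hSsum, hSsum]
    have hvk1 : (k1 : ℕ) = k - 1 := rfl
    have hvk2 : (k2 : ℕ) = k := rfl
    have hvk3 : (k3 : ℕ) = k + 1 := rfl
    rw [hvk1, hvk2, hvk3, hwi_k, hwi_k1, hwi'_k, hwi'_k1, hP']
    have eia : i k1 = a := hia
    have eib : i k2 = b := hib
    have eia' : i k3 = a := hia'
    have e'b : i' k1 = b := hi'b
    have e'a : i' k2 = a := hi'a
    have e'b' : i' k3 = b := hi'b'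
    rw [eia, eib, eia', e'b, e'a, e'b']
    set x := c k1 with hxd
    set y := c k2 with hyd
    set z := c k3 with hzd
    have ec1 : c' k1 = y + z - min x z := hc1
    have ec2 : c' k2 = min x z := hc2
    have ec3 : c' k3 = x + y - min x z := hc3
    rw [ec1, ec2, ec3]
    have r3 : (s a * s b) • α a = α b := by
      rw [mul_smul, hba, smul_add, haa, hab]; abel
    have r4 : (s b * s a) • α b = α a := by
      rw [mul_smul, hab, smul_add, hbb, hba]; abel
    rw [mul_assoc (wordProd s i (k - 1)) (s a) (s b), mul_assoc (wordProd s i (k - 1)) (s b) (s a), mul_smul (wordProd s i (k - 1)) (s a * s b),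
      mul_smul (wordProd s i (k - 1)) (s b * s a), r3, r4, mul_smul (wordProd s i (k - 1)) (s a), mul_smul (wordProd s i (k - 1)) (s b), hab, hba]
    rw [smul_add (wordProd s i (k - 1)) (α a) (α b)]
    set A := wordProd s i (k - 1) • α a
    set B := wordProd s i (k - 1) • α b
    have hcx : min x z ≤ x := min_le_left x z
    have hcz : min x z ≤ z := min_le_right x z
    obtain ⟨x', hx'⟩ : ∃ x', x = min x z + x' := ⟨x - min x z, by omega⟩
    obtain ⟨z', hz'⟩ : ∃ z', z = min x z + z' := ⟨z - min x z, by omega⟩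
    set c0 := min x z
    have hs1 : y + (c0 + z') - c0 = y + z' := by omega
    have hs2 : c0 + x' + y - c0 = x' + y := by omega
    rw [hx', hz', hs1, hs2]
    simp only [add_nsmul, smul_add, add_smul]
    abel
  · refine Finset.sum_congr rfl fun l hl => ?_
    rw [Finset.mem_compl, hmemS] at hl
    push_neg at hl
    obtain ⟨e1, e2, e3⟩ := hl
    rw [hword l e1 e2 e3, hirest l e1 e2 e3, hcrest l e1 e2 e3]
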